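/- arXiv:1308.2802 — 7 statements merged into one kernel-verified Lean document; each statement's English description precedes it below -/
import Mathlib

section
/- Let S be a monoid with group of units G equipped with a length function. Then for all a, b ∈ S: (i) Sa = Sb if and only if a = ub for some unit u; (ii) aS = bS if and only if a = bu for some unit u; (iii) SaS = SbS if and only if a = ubv for some units u, v. Consequently Green's relations L, R and J on S are given by multiplication by units. -/
/-- A length function on a monoid: a homomorphism to (ℕ, +) whose zero set is
exactly the set of units. -/
def IsLengthFunction {S : Type*} [Monoid S] (l : S → ℕ) : Prop :=
  (∀ a b : S, l (a * b) = l a + l b) ∧ ∀ a : S, l a = 0 ↔ IsUnit a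

/-- The principal right ideal `aS`. -/
def rIdeal {S : Type*} [Monoid S] (a : S) : Set S := Set.range (a * ·)

/-- The principal left ideal `Sa`. -/
def lIdeal {S : Type*} [Monoid S] (a : S) : Set S := Set.range (· * a)

/-- The principal two-sided ideal `SaS`. -/
def tIdeal {S : Type*} [Monoid S] (a : S) : Set S := {x | ∃ s t : S, x = s * a * t}

section Monoid

variable {S : Type*} [Monoid S]

theorem self_mem_lIdeal (a : S) : a ∈ lIdeal a := ⟨1, one_mul a⟩

theorem self_mem_rIdeal (a : S) : a ∈ rIdeal a := ⟨1, mul_one a⟩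

theorem self_mem_tIdeal (a : S) : a ∈ tIdeal a := ⟨1, 1, by rw [one_mul, mul_one]⟩

theorem lIdeal_units_mul (u : Sˣ) (b : S) : lIdeal (u * b) = lIdeal b := by
  ext x
  constructor
  · rintro ⟨y, rfl⟩
    exact ⟨y * u, mul_assoc _ _ _⟩
  · rintro ⟨y, rfl⟩
    exact ⟨y * ↑u⁻¹, by simp [mul_assoc]⟩

theorem rIdeal_mul_units (b : S) (u : Sˣ) : rIdeal (b * u) = rIdeal b := by
  ext x
  constructor
  · rintro ⟨y, rfl⟩
    exact ⟨u * y, (mul_assoc _ _ _).symm⟩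
  · rintro ⟨y, rfl⟩
    exact ⟨↑u⁻¹ * y, by simp [mul_assoc]⟩

theorem tIdeal_units_mul_mul_units (u : Sˣ) (b : S) (v : Sˣ) :
    tIdeal (u * b * v) = tIdeal b := by
  ext x
  constructor
  · rintro ⟨s, t, rfl⟩
    exact ⟨s * u, v * t, by simp only [mul_assoc]⟩
  · rintro ⟨s, t, rfl⟩
    exact ⟨s * ↑u⁻¹, ↑v⁻¹ * t, by simp [mul_assoc]⟩

end Monoid

namespace IsLengthFunction

variable {S : Type*} [Monoid S] {l : S → ℕ}

/-- Comparing lengths in `a = s * b * t` and `b = p * a * q` gives `l s + l t + l p + l q = 0`. -/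
theorem isUnit_of_eq_mul_mul (hl : IsLengthFunction l) {a b s t p q : S}
    (hab : a = s * b * t) (hba : b = p * a * q) : IsUnit s ∧ IsUnit t := by
  have ha : l a = l s + l b + l t := by rw [hab, hl.1, hl.1]
  have hb : l b = l p + l a + l q := by rw [hba, hl.1, hl.1]
  exact ⟨(hl.2 s).mp (by omega), (hl.2 t).mp (by omega)⟩

theorem lIdeal_eq_iff (hl : IsLengthFunction l) {a b : S} :
    lIdeal a = lIdeal b ↔ ∃ u : S, IsUnit u ∧ a = u * b := by
  constructor
  · intro h
    obtain ⟨s, hs⟩ : a ∈ lIdeal b := h ▸ self_mem_lIdeal a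
    obtain ⟨t, ht⟩ : b ∈ lIdeal a := h ▸ self_mem_lIdeal b
    have hab : a = s * b * 1 := by rw [mul_one]; exact hs.symm
    have hba : b = t * a * 1 := by rw [mul_one]; exact ht.symm
    exact ⟨s, (hl.isUnit_of_eq_mul_mul hab hba).1, hs.symm⟩
  · rintro ⟨_, ⟨u, rfl⟩, rfl⟩
    exact lIdeal_units_mul u b

theorem rIdeal_eq_iff (hl : IsLengthFunction l) {a b : S} :
    rIdeal a = rIdeal b ↔ ∃ u : S, IsUnit u ∧ a = b * u := by
  constructor
  · intro h
    obtain ⟨s, hs⟩ : a ∈ rIdeal b := h ▸ self_mem_rIdeal a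
    obtain ⟨t, ht⟩ : b ∈ rIdeal a := h ▸ self_mem_rIdeal b
    have hab : a = 1 * b * s := by rw [one_mul]; exact hs.symm
    have hba : b = 1 * a * t := by rw [one_mul]; exact ht.symm
    exact ⟨s, (hl.isUnit_of_eq_mul_mul hab hba).2, hs.symm⟩
  · rintro ⟨_, ⟨u, rfl⟩, rfl⟩
    exact rIdeal_mul_units b u

theorem tIdeal_eq_iff (hl : IsLengthFunction l) {a b : S} :
    tIdeal a = tIdeal b ↔ ∃ u v : S, IsUnit u ∧ IsUnit v ∧ a = u * b * v := by
  constructor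
  · intro h
    obtain ⟨s, t, hs⟩ : a ∈ tIdeal b := h ▸ self_mem_tIdeal a
    obtain ⟨p, q, hp⟩ : b ∈ tIdeal a := h ▸ self_mem_tIdeal b
    obtain ⟨hs_unit, ht_unit⟩ := hl.isUnit_of_eq_mul_mul hs hp
    exact ⟨s, t, hs_unit, ht_unit, hs⟩
  · rintro ⟨_, _, ⟨u, rfl⟩, ⟨v, rfl⟩, rfl⟩
    exact tIdeal_units_mul_mul_units u b v

end IsLengthFunction

theorem stmt0 {S : Type*} [Monoid S] (l : S → ℕ) (hl : IsLengthFunction l) :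
    (∀ a b : S, lIdeal a = lIdeal b ↔ ∃ u : S, IsUnit u ∧ a = u * b) ∧
    (∀ a b : S, rIdeal a = rIdeal b ↔ ∃ u : S, IsUnit u ∧ a = b * u) ∧
    (∀ a b : S, tIdeal a = tIdeal b ↔ ∃ u v : S, IsUnit u ∧ IsUnit v ∧ a = u * b * v) :=
  ⟨fun _ _ => hl.lIdeal_eq_iff, fun _ _ => hl.rIdeal_eq_iff, fun _ _ => hl.tIdeal_eq_iff⟩
end

section
/- Let S be a monoid equipped with a length function. Then: (i) an element a ∈ S is an atom if and only if aS is a maximal element of the set of proper principal right ideals of S ordered by inclusion; (ii) an element a ∈ S is an atom if and only if Sa is a maximal element of the set of proper principal left ideals of S ordered by inclusion. -/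
/-- An atom of a monoid: a non-unit that cannot be factored into two non-units. -/
def IsMonoidAtom {S : Type*} [Monoid S] (a : S) : Prop :=
  ¬IsUnit a ∧ ∀ b c : S, a = b * c → IsUnit b ∨ IsUnit c

/-!
Since `aS ⊆ bS` means `b ∣ a`, and `aS` is proper exactly when `a` is not a unit (a right inverse
`a * c = 1` forces `l a = 0`), maximality of `aS` says that `a` is a non-unit divisible by each of
its non-unit left divisors `b`, `a = b * c`. For an atom, `c` is a unit, so `a ∣ b`. Conversely,
`b = a * d = b * c * d` gives `l c = 0` on comparing lengths, so `c` is a unit. Left ideals are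
right ideals of the opposite monoid.
-/

open MulOpposite

namespace IsLengthFunction

variable {S : Type*} [Monoid S] {l : S → ℕ}

theorem isUnit_of_mul_dvd_self (hl : IsLengthFunction l) {b c : S} (h : b * c ∣ b) :
    IsUnit c := by
  obtain ⟨d, hd⟩ := h
  have hlen := congrArg l hd
  rw [hl.1, hl.1] at hlen
  exact (hl.2 c).1 (by omega)

theorem isUnit_iff_dvd_one (hl : IsLengthFunction l) {a : S} : IsUnit a ↔ a ∣ 1 :=
  ⟨IsUnit.dvd, fun h => hl.isUnit_of_mul_dvd_self (b := 1) (by rwa [one_mul])⟩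

theorem op (hl : IsLengthFunction l) : IsLengthFunction (l ∘ unop : Sᵐᵒᵖ → ℕ) :=
  ⟨fun a b => by simp only [Function.comp_apply, unop_mul, hl.1, Nat.add_comm],
    fun a => by simp only [Function.comp_apply, hl.2, isUnit_unop]⟩

theorem isMonoidAtom_iff_forall_dvd (hl : IsLengthFunction l) {a : S} :
    IsMonoidAtom a ↔ ¬IsUnit a ∧ ∀ b, b ∣ a → ¬IsUnit b → a ∣ b := by
  constructor
  · rintro ⟨ha, hatom⟩
    refine ⟨ha, ?_⟩
    rintro b ⟨c, rfl⟩ hb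
    exact ((hatom b c rfl).resolve_left hb).dvd_mul_right.mp dvd_rfl
  · rintro ⟨ha, hmax⟩
    refine ⟨ha, fun b c habc => or_iff_not_imp_left.mpr fun hb => ?_⟩
    exact hl.isUnit_of_mul_dvd_self (habc ▸ hmax b ⟨c, habc⟩ hb)

end IsLengthFunction

section Ideals

variable {S : Type*} [Monoid S]

theorem mem_rIdeal {a x : S} : x ∈ rIdeal a ↔ a ∣ x :=
  exists_congr fun _ => eq_comm

theorem rIdeal_subset_rIdeal_iff {a b : S} : rIdeal a ⊆ rIdeal b ↔ b ∣ a :=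
  ⟨fun h => mem_rIdeal.1 (h (mem_rIdeal.2 dvd_rfl)),
    fun h _ hx => mem_rIdeal.2 (h.trans (mem_rIdeal.1 hx))⟩

theorem rIdeal_eq_univ_iff {l : S → ℕ} (hl : IsLengthFunction l) {a : S} :
    rIdeal a = Set.univ ↔ IsUnit a := by
  simp only [hl.isUnit_iff_dvd_one, Set.eq_univ_iff_forall, mem_rIdeal]
  exact ⟨fun h => h 1, fun h x => h.trans (one_dvd x)⟩

theorem mem_lIdeal {a x : S} : x ∈ lIdeal a ↔ op a ∣ op x :=
  ⟨fun ⟨y, hy⟩ => ⟨op y, by rw [← hy, op_mul]⟩,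
    fun ⟨c, hc⟩ => ⟨unop c, op_injective (by rw [op_mul, op_unop, hc])⟩⟩

theorem lIdeal_subset_lIdeal_iff {a b : S} : lIdeal a ⊆ lIdeal b ↔ op b ∣ op a :=
  ⟨fun h => mem_lIdeal.1 (h (mem_lIdeal.2 dvd_rfl)),
    fun h _ hx => mem_lIdeal.2 (h.trans (mem_lIdeal.1 hx))⟩

theorem lIdeal_eq_univ_iff {l : S → ℕ} (hl : IsLengthFunction l) {a : S} :
    lIdeal a = Set.univ ↔ IsUnit a := by
  rw [← isUnit_op, hl.op.isUnit_iff_dvd_one]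
  simp only [Set.eq_univ_iff_forall, mem_lIdeal]
  exact ⟨fun h => h 1, fun h x => h.trans (one_dvd (op x))⟩

end Ideals

theorem isMonoidAtom_op_iff {S : Type*} [Monoid S] {a : S} :
    IsMonoidAtom (op a) ↔ IsMonoidAtom a := by
  simp only [IsMonoidAtom, isUnit_op, op_surjective.forall, ← op_mul, op_inj]
  exact and_congr_right' ⟨fun h b c hbc => (h c b hbc).symm, fun h b c hbc => (h c b hbc).symm⟩

theorem stmt1 {S : Type*} [Monoid S] (l : S → ℕ) (hl : IsLengthFunction l) :
    (∀ a : S, IsMonoidAtom a ↔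
      (rIdeal a ≠ Set.univ ∧
        ∀ b : S, rIdeal a ⊆ rIdeal b → rIdeal b ≠ Set.univ → rIdeal a = rIdeal b)) ∧
    (∀ a : S, IsMonoidAtom a ↔
      (lIdeal a ≠ Set.univ ∧
        ∀ b : S, lIdeal a ⊆ lIdeal b → lIdeal b ≠ Set.univ → lIdeal a = lIdeal b)) := by
  refine ⟨fun a => ?_, fun a => ?_⟩
  · simp +contextual only [hl.isMonoidAtom_iff_forall_dvd, ne_eq, rIdeal_eq_univ_iff hl,
      Set.Subset.antisymm_iff, rIdeal_subset_rIdeal_iff, true_and]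
  · rw [← isMonoidAtom_op_iff, hl.op.isMonoidAtom_iff_forall_dvd]
    simp +contextual only [op_surjective.forall, isUnit_op, ne_eq, lIdeal_eq_univ_iff hl,
      Set.Subset.antisymm_iff, lIdeal_subset_lIdeal_iff, true_and]
end

section
/- Let S be a Levi monoid and suppose a₁a₂⋯a_m = b₁b₂⋯b_n where all a_i and b_j are atoms of S. Then m = n, and there exist units g₁, …, g_{n−1} of S such that a₁ = b₁g₁, a_i = g_{i−1}⁻¹ b_i g_i for 1 < i < n, and a_n = g_{n−1}⁻¹ b_n. -/
/-- An equidivisible monoid. -/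
def Equidivisible (S : Type*) [Monoid S] : Prop :=
  ∀ a b c d : S, a * b = c * d →
    (∃ u : S, a = c * u ∧ d = u * b) ∨ ∃ v : S, c = a * v ∧ b = v * d

/-- A Levi monoid: an equidivisible monoid equipped with a length function and
containing at least one non-unit. -/
def IsLeviMonoid (S : Type*) [Monoid S] : Prop :=
  Equidivisible S ∧ (∃ l : S → ℕ, IsLengthFunction l) ∧ ∃ a : S, ¬IsUnit a

theorem isMonoidAtom_iff_irreducible {S : Type*} [Monoid S] {a : S} :
    IsMonoidAtom a ↔ Irreducible a :=
  irreducible_iff.symm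

namespace IsLengthFunction

variable {S : Type*} [Monoid S] {l : S → ℕ}

theorem isUnit_of_mul_isUnit_left (hl : IsLengthFunction l) {a b : S} (h : IsUnit (a * b)) :
    IsUnit a := by
  have hab := (hl.2 _).2 h
  rw [hl.1] at hab
  exact (hl.2 a).1 (by omega)

end IsLengthFunction

namespace Equidivisible

variable {S : Type*} [Monoid S]

theorem exists_unit_of_mul_eq_mul (E : Equidivisible S) {a b c d : S} (ha : Irreducible a)
    (hc : Irreducible c) (h : a * b = c * d) : ∃ u : Sˣ, a = c * u ∧ d = u * b := by
  rcases E a b c d h with ⟨u, rfl, rfl⟩ | ⟨v, rfl, rfl⟩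
  · have hu := (ha.isUnit_or_isUnit rfl).resolve_left hc.not_isUnit
    exact ⟨hu.unit, rfl, rfl⟩
  · have hv := (hc.isUnit_or_isUnit rfl).resolve_left ha.not_isUnit
    exact ⟨hv.unit⁻¹, by simp [mul_assoc], by simp [← mul_assoc]⟩

theorem exists_units_conj_of_prod_eq (E : Equidivisible S) {l : S → ℕ}
    (hl : IsLengthFunction l) {m n : ℕ} (a : Fin m → S) (b : Fin n → S)
    (ha : ∀ i, Irreducible (a i)) (hb : ∀ i, Irreducible (b i)) (g : Sˣ)
    (heq : ↑g * (List.ofFn a).prod = (List.ofFn b).prod) :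
    ∃ h : m = n, ∃ G : Fin (n + 1) → Sˣ, G 0 = g ∧ G (Fin.last n) = 1 ∧
      ∀ i : Fin n, a (Fin.cast h.symm i) = ↑(G i.castSucc)⁻¹ * b i * ↑(G i.succ) := by
  induction m generalizing n g with
  | zero =>
    cases n with
    | zero =>
      refine ⟨rfl, fun _ => 1, Units.ext ?_, rfl, fun i => i.elim0⟩
      simpa using heq.symm
    | succ n =>
      rw [List.ofFn_zero, List.prod_nil, mul_one, List.ofFn_succ, List.prod_cons] at heq
      exact absurd (hl.isUnit_of_mul_isUnit_left (heq ▸ g.isUnit)) (hb 0).not_isUnit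
  | succ m ih =>
    cases n with
    | zero =>
      rw [List.ofFn_zero, List.prod_nil, List.ofFn_succ, List.prod_cons] at heq
      have hunit : IsUnit (a 0 * (List.ofFn fun i => a i.succ).prod) :=
        (Units.isUnit_units_mul g _).1 (heq ▸ isUnit_one)
      exact absurd (hl.isUnit_of_mul_isUnit_left hunit) (ha 0).not_isUnit
    | succ n =>
      rw [List.ofFn_succ, List.prod_cons, List.ofFn_succ, List.prod_cons, ← mul_assoc] at heq
      obtain ⟨u, hu, hrest⟩ := E.exists_unit_of_mul_eq_mul
        ((irreducible_units_mul g).2 (ha 0)) (hb 0) heq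
      obtain ⟨rfl, G, hG0, hGlast, hG⟩ :=
        ih _ _ (fun i => ha i.succ) (fun i => hb i.succ) u hrest.symm
      refine ⟨rfl, Fin.cons g G, rfl, hGlast, Fin.cases ?_ fun i => by simpa using hG i⟩
      simp [hG0, mul_assoc, ← hu]

end Equidivisible

/-- If `a₁ ⋯ a_m = b₁ ⋯ b_n` with all factors atoms, then `m = n` and the two
factorizations are interleaved by units `g₀ = 1, g₁, …, g_{n-1}, g_n = 1`
with `a_i = g_{i-1}⁻¹ * b_i * g_i`. -/
theorem stmt5 {S : Type*} [Monoid S] (hS : IsLeviMonoid S)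
    (m n : ℕ) (a : Fin m → S) (b : Fin n → S)
    (ha : ∀ i, IsMonoidAtom (a i)) (hb : ∀ i, IsMonoidAtom (b i))
    (heq : (List.ofFn a).prod = (List.ofFn b).prod) :
    ∃ h : m = n, ∃ g : Fin (n + 1) → Sˣ,
      g 0 = 1 ∧ g (Fin.last n) = 1 ∧
      ∀ i : Fin n,
        a (Fin.cast h.symm i) = (↑(g i.castSucc)⁻¹ : S) * b i * (g i.succ : S) := by
  obtain ⟨E, ⟨l, hl⟩, -⟩ := hS
  simpa using E.exists_units_conj_of_prod_eq hl a b
    (fun i => isMonoidAtom_iff_irreducible.1 (ha i))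
    (fun i => isMonoidAtom_iff_irreducible.1 (hb i)) 1 (by simpa using heq)
end

section
/- A monoid S is isomorphic to the free monoid on some nonempty set if and only if S is a Levi monoid whose group of units is trivial (the identity is the only unit of S). -/
/-!
A free monoid is equidivisible because two factorizations of the same word are cut at two
positions, one of which comes first; the word length is a length function. Conversely, in a Levi
monoid with trivial units every element is a product of irreducibles (induction on length), and
equidivisibility makes this factorization unique: from `x * a = y * b` with `x`, `y` irreducible
one gets, say, `x = y * u`, where irreducibility of `x` makes `u` a unit, i.e. `u = 1`. Hence the
monoid is free on its irreducibles.
-/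

section Transfer

variable {S T : Type*} [Monoid S] [Monoid T]

theorem Equidivisible.of_mulEquiv (e : S ≃* T) (hT : Equidivisible T) : Equidivisible S := by
  intro a b c d h
  rcases hT (e a) (e b) (e c) (e d) (by rw [← map_mul, ← map_mul, h]) with
    ⟨u, ha, hd⟩ | ⟨v, hc, hb⟩
  · exact .inl ⟨e.symm u, e.injective (by simpa using ha), e.injective (by simpa using hd)⟩
  · exact .inr ⟨e.symm v, e.injective (by simpa using hc), e.injective (by simpa using hb)⟩

theorem IsLengthFunction.comp_mulEquiv {l : T → ℕ} (hl : IsLengthFunction l) (e : S ≃* T) :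
    IsLengthFunction (l ∘ e) :=
  ⟨fun a b => by simp [hl.1], fun a => (hl.2 (e a)).trans (MulEquiv.isUnit_map e)⟩

theorem IsLeviMonoid.of_mulEquiv (e : S ≃* T) (hT : IsLeviMonoid T) : IsLeviMonoid S := by
  obtain ⟨hdiv, ⟨l, hl⟩, a, ha⟩ := hT
  exact ⟨hdiv.of_mulEquiv e, ⟨_, hl.comp_mulEquiv e⟩, e.symm a, by rwa [MulEquiv.isUnit_map]⟩

end Transfer

namespace FreeMonoid

variable {X : Type*}

theorem equidivisible : Equidivisible (FreeMonoid X) := by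
  intro a b c d h
  have hlist : a.toList ++ b.toList = c.toList ++ d.toList := by
    simpa only [toList_mul] using congrArg toList h
  rcases List.append_eq_append_iff.mp hlist with ⟨w, hc, hb⟩ | ⟨w, ha, hd⟩
  · exact .inr ⟨ofList w, toList.injective hc, toList.injective hb⟩
  · exact .inl ⟨ofList w, toList.injective ha, toList.injective hd⟩

theorem isLengthFunction_length : IsLengthFunction (length : FreeMonoid X → ℕ) :=
  ⟨length_mul, fun a => by rw [isUnit_iff_eq_one, length_eq_zero]⟩

theorem isLeviMonoid [Nonempty X] : IsLeviMonoid (FreeMonoid X) :=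
  ⟨equidivisible, ⟨_, isLengthFunction_length⟩, of (Classical.arbitrary X), by simp⟩

end FreeMonoid

section FreeOnIrreducibles

variable {S : Type*} [Monoid S]

theorem IsLengthFunction.isUnit_left_of_mul_eq_one {l : S → ℕ} (hl : IsLengthFunction l)
    {a b : S} (h : a * b = 1) : IsUnit a := by
  have hsum : l a + l b = 0 := by rw [← hl.1, h, hl.2]; exact isUnit_one
  exact (hl.2 a).mp (by omega)

variable [Subsingleton Sˣ]

theorem Equidivisible.eq_and_eq_of_irreducible_mul (hS : Equidivisible S) {x y a b : S}
    (hx : Irreducible x) (hy : Irreducible y) (h : x * a = y * b) : x = y ∧ a = b := by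
  rcases hS _ _ _ _ h with ⟨u, hxu, hb⟩ | ⟨v, hyv, ha⟩
  · obtain rfl : u = 1 := ((hx.isUnit_or_isUnit hxu).resolve_left hy.not_isUnit).eq_one
    simp_all
  · obtain rfl : v = 1 := ((hy.isUnit_or_isUnit hyv).resolve_left hx.not_isUnit).eq_one
    simp_all

theorem IsLengthFunction.surjective_lift_irreducible {l : S → ℕ} (hl : IsLengthFunction l) :
    Function.Surjective (FreeMonoid.lift ((↑) : {x : S // Irreducible x} → S)) := by
  intro a
  induction hn : l a using Nat.strong_induction_on generalizing a with
  | _ n ih =>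
  by_cases ha : IsUnit a
  · exact ⟨1, by rw [map_one, ha.eq_one]⟩
  rcases irreducible_or_factor ha with ha | ⟨b, c, hb, hc, rfl⟩
  · exact ⟨.of ⟨a, ha⟩, rfl⟩
  have hlb : 0 < l b := Nat.pos_of_ne_zero fun h => hb ((hl.2 b).mp h)
  have hlc : 0 < l c := Nat.pos_of_ne_zero fun h => hc ((hl.2 c).mp h)
  have hlbc := hl.1 b c
  obtain ⟨v, rfl⟩ := ih (l b) (by omega) b rfl
  obtain ⟨w, rfl⟩ := ih (l c) (by omega) c rfl
  exact ⟨v * w, map_mul _ _ _⟩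

theorem Equidivisible.injective_lift_irreducible (hS : Equidivisible S) {l : S → ℕ}
    (hl : IsLengthFunction l) :
    Function.Injective (FreeMonoid.lift ((↑) : {x : S // Irreducible x} → S)) := by
  suffices ∀ L M : List {x : S // Irreducible x},
      (L.map Subtype.val).prod = (M.map Subtype.val).prod → L = M from fun v w h =>
    FreeMonoid.toList.injective (this _ _ (by simpa only [FreeMonoid.lift_apply] using h))
  intro L
  induction L with
  | nil =>
    rintro (_ | ⟨y, M⟩) h
    · rfl
    · exact absurd (hl.isUnit_left_of_mul_eq_one (by simpa using h.symm)) y.2.not_isUnit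
  | cons x L ih =>
    rintro (_ | ⟨y, M⟩) h
    · exact absurd (hl.isUnit_left_of_mul_eq_one (by simpa using h)) x.2.not_isUnit
    · simp only [List.map_cons, List.prod_cons] at h
      obtain ⟨hxy, hLM⟩ := hS.eq_and_eq_of_irreducible_mul x.2 y.2 h
      rw [Subtype.ext hxy, ih M hLM]

end FreeOnIrreducibles

/-- A monoid is free on some nonempty set iff it is a Levi monoid with trivial
group of units. -/
theorem stmt6 {S : Type u} [Monoid S] :
    (∃ (X : Type u) (_ : Nonempty X), Nonempty (S ≃* FreeMonoid X)) ↔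
    (IsLeviMonoid S ∧ ∀ a : S, IsUnit a → a = 1) := by
  constructor
  · rintro ⟨X, _, ⟨e⟩⟩
    have : Subsingleton Sˣ := (Units.mapEquiv e).injective.subsingleton
    exact ⟨FreeMonoid.isLeviMonoid.of_mulEquiv e, fun a => IsUnit.eq_one⟩
  · rintro ⟨⟨hS, ⟨l, hl⟩, a, ha⟩, hu⟩
    have := Subsingleton.units_of_isUnit hu
    have hbij := And.intro (hS.injective_lift_irreducible hl) hl.surjective_lift_irreducible
    refine ⟨{x : S // Irreducible x}, ?_, ⟨(MulEquiv.ofBijective _ hbij).symm⟩⟩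
    by_contra hempty
    have := not_nonempty_iff.mp hempty
    obtain ⟨w, rfl⟩ := hbij.2 a
    exact ha (by rw [Subsingleton.elim w 1, map_one]; exact isUnit_one)
end

section
/- Let S be a Levi monoid. Then: (i) S is left cancellative if and only if for every atom x of S and every unit g, xg = x implies g = 1; (ii) S is right cancellative if and only if for every atom x of S and every unit g, gx = x implies g = 1; (iii) S is cancellative if and only if both conditions in (i) and (ii) hold. -/
/-!
A length function lets one argue by induction on length: every non-unit is a product of atoms,
and a product of two non-units is strictly longer than each factor. Cancellation by a product
follows from cancellation by its factors, so it suffices to cancel an atom `x`. If `x * b = x * c`,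
equidivisibility gives `u` with `x = x * u` and `c = u * b` (or the symmetric alternative);
additivity of length forces `u` to be a unit, so `u = 1` by hypothesis and `b = c`.
-/

theorem exists_mul_of_not_isMonoidAtom {S : Type*} [Monoid S] {a : S} (ha : ¬IsUnit a)
    (hat : ¬IsMonoidAtom a) : ∃ p q : S, a = p * q ∧ ¬IsUnit p ∧ ¬IsUnit q := by
  by_contra! h
  exact hat ⟨ha, fun b c hbc => or_iff_not_imp_left.mpr (h b c hbc)⟩

namespace IsLengthFunction

variable {S : Type*} [Monoid S] {l : S → ℕ}

theorem isUnit_of_mul_eq_left (hl : IsLengthFunction l) {a u : S} (h : a * u = a) :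
    IsUnit u :=
  (hl.2 u).1 (by have := hl.1 a u; rw [h] at this; omega)

theorem isUnit_of_mul_eq_right (hl : IsLengthFunction l) {a u : S} (h : u * a = a) :
    IsUnit u :=
  (hl.2 u).1 (by have := hl.1 u a; rw [h] at this; omega)

theorem lt_mul_left (hl : IsLengthFunction l) (p : S) {q : S} (hq : ¬IsUnit q) :
    l p < l (p * q) := by
  have := hl.1 p q
  have := mt (hl.2 q).1 hq
  omega

theorem lt_mul_right (hl : IsLengthFunction l) {p : S} (hp : ¬IsUnit p) (q : S) :
    l q < l (p * q) := by
  have := hl.1 p q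
  have := mt (hl.2 p).1 hp
  omega

theorem induction_on_atoms (hl : IsLengthFunction l) {P : S → Prop}
    (unit : ∀ u, IsUnit u → P u) (atom : ∀ x, IsMonoidAtom x → P x)
    (mul : ∀ p q, ¬IsUnit p → ¬IsUnit q → P p → P q → P (p * q)) (a : S) : P a := by
  induction a using (measure l).wf.induction with
  | h a ih =>
    by_cases ha : IsUnit a
    · exact unit a ha
    by_cases hat : IsMonoidAtom a
    · exact atom a hat
    obtain ⟨p, q, rfl, hp, hq⟩ := exists_mul_of_not_isMonoidAtom ha hat
    exact mul p q hp hq (ih p (hl.lt_mul_left p hq)) (ih q (hl.lt_mul_right hp q))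

end IsLengthFunction

namespace Equidivisible

variable {S : Type*} [Monoid S] {l : S → ℕ}

theorem mul_left_cancel_of_atoms (hE : Equidivisible S) (hl : IsLengthFunction l)
    (hx : ∀ x g : S, IsMonoidAtom x → IsUnit g → x * g = x → g = 1) (a b c : S)
    (h : a * b = a * c) : b = c := by
  induction a using hl.induction_on_atoms generalizing b c with
  | unit u hu => exact hu.mul_left_cancel h
  | atom x hxa =>
    rcases hE x b x c h with ⟨u, hxu, rfl⟩ | ⟨v, hxv, rfl⟩
    · rw [hx x u hxa (hl.isUnit_of_mul_eq_left hxu.symm) hxu.symm, one_mul]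
    · rw [hx x v hxa (hl.isUnit_of_mul_eq_left hxv.symm) hxv.symm, one_mul]
  | mul p q _ _ hp hq =>
    rw [mul_assoc, mul_assoc] at h
    exact hq b c (hp _ _ h)

theorem mul_right_cancel_of_atoms (hE : Equidivisible S) (hl : IsLengthFunction l)
    (hx : ∀ x g : S, IsMonoidAtom x → IsUnit g → g * x = x → g = 1) (a b c : S)
    (h : b * a = c * a) : b = c := by
  induction a using hl.induction_on_atoms generalizing b c with
  | unit u hu => exact hu.mul_right_cancel h
  | atom x hxa =>
    rcases hE b x c x h with ⟨u, rfl, hxu⟩ | ⟨v, rfl, hxv⟩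
    · rw [hx x u hxa (hl.isUnit_of_mul_eq_right hxu.symm) hxu.symm, mul_one]
    · rw [hx x v hxa (hl.isUnit_of_mul_eq_right hxv.symm) hxv.symm, mul_one]
  | mul p q _ _ hp hq =>
    rw [← mul_assoc, ← mul_assoc] at h
    exact hp b c (hq _ _ h)

end Equidivisible

theorem stmt7 {S : Type*} [Monoid S] (hS : IsLeviMonoid S) :
    ((∀ a b c : S, a * b = a * c → b = c) ↔
      ∀ x g : S, IsMonoidAtom x → IsUnit g → x * g = x → g = 1) ∧
    ((∀ a b c : S, b * a = c * a → b = c) ↔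
      ∀ x g : S, IsMonoidAtom x → IsUnit g → g * x = x → g = 1) ∧
    (((∀ a b c : S, a * b = a * c → b = c) ∧ (∀ a b c : S, b * a = c * a → b = c)) ↔
      ((∀ x g : S, IsMonoidAtom x → IsUnit g → x * g = x → g = 1) ∧
        ∀ x g : S, IsMonoidAtom x → IsUnit g → g * x = x → g = 1)) := by
  obtain ⟨hE, ⟨l, hl⟩, -⟩ := hS
  have left : (∀ a b c : S, a * b = a * c → b = c) ↔
      ∀ x g : S, IsMonoidAtom x → IsUnit g → x * g = x → g = 1 :=
    ⟨fun hc x g _ _ hxg => hc x g 1 (by rw [hxg, mul_one]), hE.mul_left_cancel_of_atoms hl⟩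
  have right : (∀ a b c : S, b * a = c * a → b = c) ↔
      ∀ x g : S, IsMonoidAtom x → IsUnit g → g * x = x → g = 1 :=
    ⟨fun hc x g _ _ hgx => hc x g 1 (by rw [hgx, one_mul]), hE.mul_right_cancel_of_atoms hl⟩
  exact ⟨left, right, and_congr left right⟩
end

section
/- Let V be a group, let U be a subgroup of V, and let φ : U → V be a group homomorphism whose image is a subgroup of V (a partial endomorphism of V with domain of definition U). Let M be the monoid presented by generators the elements of V together with one additional generator x, subject to all relations holding in V together with the relations ux = xφ(u) for all u ∈ U. Then M is a left Rees monoid; moreover the canonical map V → M is injective, its image is exactly the group of units of M, and the image of x in M is an atom. -/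
/-- A left Rees monoid: a left cancellative Levi monoid. -/
def IsLeftReesMonoid (S : Type*) [Monoid S] : Prop :=
  (∀ a b c : S, a * b = a * c → b = c) ∧ IsLeviMonoid S

/-- The defining relations of the monoid
`Mon⟨V, x ∣ relations of V, u x = x φ(u) (u ∈ U)⟩` on the free monoid over the
alphabet `V ⊕ Unit` (`Sum.inr ()` playing the role of the new generator `x`). -/
def presRel (V : Type*) [Group V] (U : Subgroup V) (φ : U →* V) :
    FreeMonoid (V ⊕ Unit) → FreeMonoid (V ⊕ Unit) → Prop := fun w₁ w₂ =>
  (∃ a b : V, w₁ = FreeMonoid.of (Sum.inl a) * FreeMonoid.of (Sum.inl b) ∧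
      w₂ = FreeMonoid.of (Sum.inl (a * b))) ∨
  (w₁ = FreeMonoid.of (Sum.inl (1 : V)) ∧ w₂ = 1) ∨
  (∃ u : U, w₁ = FreeMonoid.of (Sum.inl (u : V)) * FreeMonoid.of (Sum.inr ()) ∧
      w₂ = FreeMonoid.of (Sum.inr ()) * FreeMonoid.of (Sum.inl (φ u)))

/-- The presented monoid `Mon⟨V, x ∣ relations of V, u x = x φ(u) (u ∈ U)⟩`. -/
def PresM (V : Type*) [Group V] (U : Subgroup V) (φ : U →* V) :=
  (conGen (presRel V U φ)).Quotient

instance (V : Type*) [Group V] (U : Subgroup V) (φ : U →* V) : Monoid (PresM V U φ) := by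
  delta PresM; infer_instance

/-!
Fix a transversal of the left cosets of `U`. Using `u x = x φ(u)` to push the `U`-part of each
letter of `V` through the next `x`, every element becomes `t₁ x t₂ x ⋯ tₖ x w` with the `tᵢ` in
the transversal and `w ∈ V`. This normal form is unique: the monoid acts on the right on pairs
(list of cosets, element of `V`) by the same rewriting, the action respects the defining relations,
and acting on `([], 1)` recovers the normal form. Multiplying on the right only extends the list of
cosets, so left divisibility is the prefix order on these lists, which is total on the prefixes of
a fixed list; this gives left cancellativity and equidivisibility. The number of `x`'s is a length
function vanishing exactly on `V`, and `x` has length one, hence is an atom.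
-/

section LengthAndDivisibility

variable {S : Type*} [Monoid S]

theorem equidivisible_of_dvd_or_dvd (hcancel : ∀ a b c : S, a * b = a * c → b = c)
    (hdvd : ∀ a b c d : S, a * b = c * d → a ∣ c ∨ c ∣ a) : Equidivisible S := by
  intro a b c d h
  rcases hdvd a b c d h with ⟨v, rfl⟩ | ⟨u, rfl⟩
  · exact Or.inr ⟨v, rfl, hcancel a _ _ (h.trans (mul_assoc a v d))⟩
  · exact Or.inl ⟨u, rfl, (hcancel c _ _ ((mul_assoc c u b).symm.trans h)).symm⟩

theorem eq_zero_of_isUnit_of_map_mul {l : S → ℕ} (hl : ∀ a b : S, l (a * b) = l a + l b)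
    {a : S} (ha : IsUnit a) : l a = 0 := by
  obtain ⟨b, hab, -⟩ := isUnit_iff_exists.mp ha
  have h1 : l 1 = 0 := by simpa using hl 1 1
  have := hl a b
  rw [hab, h1] at this
  omega

theorem IsLengthFunction.isMonoidAtom {l : S → ℕ} (hl : IsLengthFunction l) {a : S}
    (ha : l a = 1) : IsMonoidAtom a := by
  refine ⟨fun hu => by simp [(hl.2 a).mpr hu] at ha, fun b c hbc => ?_⟩
  have : l b + l c = 1 := by rw [← hl.1, ← hbc, ha]
  rcases Nat.eq_zero_or_pos (l b) with hb | hb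
  · exact Or.inl ((hl.2 b).mp hb)
  · exact Or.inr ((hl.2 c).mp (by omega))

end LengthAndDivisibility

namespace Subgroup

variable {V : Type*} [Group V] (U : Subgroup V)

noncomputable def cosetOffset (w : V) : U :=
  ⟨(w : V ⧸ U).out⁻¹ * w,
    QuotientGroup.leftRel_apply.mp (Quotient.mk_out (s := QuotientGroup.leftRel U) w)⟩

theorem out_mul_cosetOffset (w : V) : (w : V ⧸ U).out * cosetOffset U w = w := by
  simp [cosetOffset]

theorem cosetOffset_mul (w : V) (u : U) : cosetOffset U (w * u) = cosetOffset U w * u := by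
  ext
  simp [cosetOffset, QuotientGroup.mk_mul_of_mem w u.2, mul_assoc]

end Subgroup

namespace PresM

open Subgroup

variable {V : Type*} [Group V] {U : Subgroup V} {φ : U →* V}

variable (U φ) in
def incl (v : V) : PresM V U φ := (conGen (presRel V U φ)).mk' (FreeMonoid.of (Sum.inl v))

variable (U φ) in
def X : PresM V U φ := (conGen (presRel V U φ)).mk' (FreeMonoid.of (Sum.inr ()))

theorem mk'_eq_of_presRel {w₁ w₂ : FreeMonoid (V ⊕ Unit)} (h : presRel V U φ w₁ w₂) :
    (conGen (presRel V U φ)).mk' w₁ = (conGen (presRel V U φ)).mk' w₂ :=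
  (Con.eq _).mpr (ConGen.Rel.of _ _ h)

theorem incl_mul (v w : V) : incl U φ v * incl U φ w = incl U φ (v * w) :=
  (map_mul _ _ _).symm.trans <| mk'_eq_of_presRel <| Or.inl ⟨v, w, rfl, rfl⟩

theorem incl_one : incl U φ 1 = 1 :=
  (mk'_eq_of_presRel <| Or.inr <| Or.inl ⟨rfl, rfl⟩).trans (map_one _)

theorem incl_mul_X (u : U) : incl U φ u * X U φ = X U φ * incl U φ (φ u) :=
  (map_mul _ _ _).symm.trans <| (mk'_eq_of_presRel <| Or.inr <| Or.inr ⟨u, rfl, rfl⟩).trans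
    (map_mul _ _ _)

theorem isUnit_incl (v : V) : IsUnit (incl U φ v) :=
  isUnit_iff_exists.mpr ⟨incl U φ v⁻¹, by simp [incl_mul, incl_one]⟩

@[elab_as_elim]
theorem induction_on {P : PresM V U φ → Prop} (m : PresM V U φ) (incl : ∀ v, P (incl U φ v))
    (X : P (X U φ)) (mul : ∀ a b, P a → P b → P (a * b)) : P m := by
  induction m using Con.induction_on with
  | H w =>
    induction w using FreeMonoid.inductionOn with
    | one => exact cast (congrArg P incl_one) (incl 1)
    | of a => cases a with
      | inl v => exact incl v
      | inr => exact X
    | mul w₁ w₂ h₁ h₂ => exact mul _ _ h₁ h₂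

abbrev NormalForm (U : Subgroup V) := List (V ⧸ U) × V

variable (φ) in
noncomputable def step : V ⊕ Unit → NormalForm U → NormalForm U
  | .inl v, (l, w) => (l, w * v)
  | .inr (), (l, w) => (l ++ [(w : V ⧸ U)], φ (cosetOffset U w))

variable (φ) in
noncomputable def wordAct : FreeMonoid (V ⊕ Unit) →* (Function.End (NormalForm U))ᵐᵒᵖ :=
  FreeMonoid.lift fun a => .op (step φ a)

theorem conGen_le_ker_wordAct : conGen (presRel V U φ) ≤ Con.ker (wordAct φ) := by
  refine Con.conGen_le.mpr ?_
  rintro w₁ w₂ (⟨a, b, rfl, rfl⟩ | ⟨rfl, rfl⟩ | ⟨u, rfl, rfl⟩) <;>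
    refine MulOpposite.unop_injective (funext fun ⟨l, w⟩ => ?_)
  · show step φ (.inl b) (step φ (.inl a) (l, w)) = step φ (.inl (a * b)) (l, w)
    simp [step, mul_assoc]
  · show step φ (.inl 1) (l, w) = (l, w)
    simp [step]
  · show step φ (.inr ()) (step φ (.inl u) (l, w))
      = step φ (.inl (φ u)) (step φ (.inr ()) (l, w))
    simp [step, QuotientGroup.mk_mul_of_mem w u.2, cosetOffset_mul]

variable (U φ) in
noncomputable def actHom : PresM V U φ →* (Function.End (NormalForm U))ᵐᵒᵖ :=
  Con.lift _ (wordAct φ) conGen_le_ker_wordAct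

noncomputable def act (m : PresM V U φ) (n : NormalForm U) : NormalForm U :=
  (actHom U φ m).unop n

theorem act_mul (a b : PresM V U φ) (n : NormalForm U) : act (a * b) n = act b (act a n) := by
  simp only [act, map_mul]
  rfl

theorem act_incl (v : V) (n : NormalForm U) : act (incl U φ v) n = (n.1, n.2 * v) := rfl

theorem act_X (n : NormalForm U) :
    act (X U φ) n = (n.1 ++ [(n.2 : V ⧸ U)], φ (cosetOffset U n.2)) := rfl

theorem act_append_left (m : PresM V U φ) (l₀ : List (V ⧸ U)) (n : NormalForm U) :
    act m (l₀ ++ n.1, n.2) = (l₀ ++ (act m n).1, (act m n).2) := by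
  induction m using induction_on generalizing n with
  | incl v => rfl
  | X => simp [act_X]
  | mul a b ha hb => rw [act_mul, act_mul, ha, hb]

noncomputable def nf (m : PresM V U φ) : NormalForm U := act m ([], 1)

theorem nf_incl (v : V) : nf (incl U φ v) = ([], v) := by
  rw [nf, act_incl, one_mul]

theorem act_eq_append_nf (m : PresM V U φ) (l : List (V ⧸ U)) (w : V) :
    act m (l, w) = (l ++ (nf (incl U φ w * m)).1, (nf (incl U φ w * m)).2) := by
  rw [nf, act_mul, act_incl, one_mul, ← act_append_left, List.append_nil]

theorem nf_mul (a b : PresM V U φ) :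
    nf (a * b) =
      ((nf a).1 ++ (nf (incl U φ (nf a).2 * b)).1, (nf (incl U φ (nf a).2 * b)).2) := by
  rw [nf, act_mul, ← nf, act_eq_append_nf]

theorem nf_fst_prefix_mul (a b : PresM V U φ) : (nf a).1 <+: (nf (a * b)).1 := by
  rw [nf_mul]
  exact List.prefix_append _ _

variable (φ) in
noncomputable def emb (n : NormalForm U) : PresM V U φ :=
  (n.1.map fun c => incl U φ c.out * X U φ).prod * incl U φ n.2

theorem emb_mul_incl (n : NormalForm U) (v : V) :
    emb φ n * incl U φ v = emb φ (n.1, n.2 * v) := by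
  rw [emb, emb, mul_assoc, incl_mul]

theorem emb_mul_X (n : NormalForm U) :
    emb φ n * X U φ = emb φ (n.1 ++ [(n.2 : V ⧸ U)], φ (cosetOffset U n.2)) := by
  conv_lhs => rw [emb, ← out_mul_cosetOffset U n.2, ← incl_mul]
  simp only [emb, List.map_append, List.prod_append, List.map_singleton, List.prod_singleton,
    mul_assoc, incl_mul_X]

theorem emb_append (l₁ l₂ : List (V ⧸ U)) (w : V) :
    emb φ (l₁, 1) * emb φ (l₂, w) = emb φ (l₁ ++ l₂, w) := by
  simp only [emb, incl_one, mul_one, List.map_append, List.prod_append, mul_assoc]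

theorem emb_act (m : PresM V U φ) (n : NormalForm U) : emb φ (act m n) = emb φ n * m := by
  induction m using induction_on generalizing n with
  | incl v => rw [act_incl, emb_mul_incl]
  | X => rw [act_X, emb_mul_X]
  | mul a b ha hb => rw [act_mul, hb, ha, mul_assoc]

theorem emb_nf (m : PresM V U φ) : emb φ (nf m) = m := by
  rw [nf, emb_act, emb, List.map_nil, List.prod_nil, incl_one, one_mul, one_mul]

theorem nf_injective : Function.Injective (nf : PresM V U φ → NormalForm U) :=
  Function.LeftInverse.injective emb_nf

variable (U φ) in
theorem incl_injective : Function.Injective (incl U φ) := fun v w h => by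
  simpa [nf_incl] using congrArg nf h

theorem mul_left_cancel {a b c : PresM V U φ} (h : a * b = a * c) : b = c := by
  have hnf := congrArg nf h
  rw [nf_mul a b, nf_mul a c, Prod.mk.injEq, List.append_cancel_left_eq] at hnf
  have hw : incl U φ (nf a).2 * b = incl U φ (nf a).2 * c := nf_injective (Prod.ext hnf.1 hnf.2)
  exact (isUnit_incl _).mul_left_cancel hw

theorem dvd_of_nf_fst_prefix {a c : PresM V U φ} (h : (nf a).1 <+: (nf c).1) : a ∣ c := by
  obtain ⟨r, hr⟩ := h
  refine ⟨incl U φ (nf a).2⁻¹ * emb φ (r, (nf c).2), ?_⟩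
  nth_rewrite 1 [← emb_nf a]
  rw [← mul_assoc, emb_mul_incl, mul_inv_cancel, emb_append, hr, emb_nf]

theorem dvd_or_dvd_of_mul_eq_mul {a b c d : PresM V U φ} (h : a * b = c * d) :
    a ∣ c ∨ c ∣ a := by
  have hc := nf_fst_prefix_mul c d
  rw [← h] at hc
  exact (List.prefix_or_prefix_of_prefix (nf_fst_prefix_mul a b) hc).imp
    dvd_of_nf_fst_prefix dvd_of_nf_fst_prefix

theorem equidivisible : Equidivisible (PresM V U φ) :=
  equidivisible_of_dvd_or_dvd (fun _ _ _ => mul_left_cancel) fun _ _ _ _ =>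
    dvd_or_dvd_of_mul_eq_mul

variable (U φ) in
def lengthHom : PresM V U φ →* Multiplicative ℕ :=
  Con.lift _ (FreeMonoid.countP fun a : V ⊕ Unit => a.isRight) <| Con.conGen_le.mpr <| by
    rintro w₁ w₂ (⟨a, b, rfl, rfl⟩ | ⟨rfl, rfl⟩ | ⟨u, rfl, rfl⟩) <;>
      simp [Con.ker_rel, FreeMonoid.countP_of]

def len (m : PresM V U φ) : ℕ := (lengthHom U φ m).toAdd

theorem len_mul (a b : PresM V U φ) : len (a * b) = len a + len b := by
  simp [len]

theorem len_incl (v : V) : len (incl U φ v) = 0 := rfl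

theorem len_X : len (X U φ) = 1 := rfl

theorem len_emb (l : List (V ⧸ U)) (w : V) : len (emb φ (l, w)) = l.length := by
  induction l with
  | nil => simp [emb, len_incl]
  | cons c l ih =>
    rw [List.length_cons, ← ih]
    simp only [emb, List.map_cons, List.prod_cons, mul_assoc, len_mul, len_incl, len_X]
    omega

theorem len_eq_length_nf (m : PresM V U φ) : len m = (nf m).1.length := by
  conv_lhs => rw [← emb_nf m]
  exact len_emb _ _

theorem eq_incl_of_len_eq_zero {m : PresM V U φ} (h : len m = 0) : m = incl U φ (nf m).2 := by
  rw [len_eq_length_nf, List.length_eq_zero_iff] at h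
  conv_lhs => rw [← emb_nf m]
  rw [emb, h, List.map_nil, List.prod_nil, one_mul]

theorem isUnit_iff_exists_eq_incl (m : PresM V U φ) : IsUnit m ↔ ∃ v, m = incl U φ v :=
  ⟨fun h => ⟨_, eq_incl_of_len_eq_zero (eq_zero_of_isUnit_of_map_mul len_mul h)⟩,
    fun ⟨v, hv⟩ => hv ▸ isUnit_incl v⟩

theorem isLengthFunction_len : IsLengthFunction (len : PresM V U φ → ℕ) :=
  ⟨len_mul, fun m =>
    ⟨fun h => (isUnit_iff_exists_eq_incl m).mpr ⟨_, eq_incl_of_len_eq_zero h⟩,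
      eq_zero_of_isUnit_of_map_mul len_mul⟩⟩

theorem isMonoidAtom_X : IsMonoidAtom (X U φ) :=
  isLengthFunction_len.isMonoidAtom len_X

end PresM

/-- The presented monoid is a left Rees monoid, `V` embeds as its group of
units, and the extra generator `x` is an atom. -/
theorem stmt17 {V : Type*} [Group V] (U : Subgroup V) (φ : U →* V) :
    IsLeftReesMonoid (PresM V U φ) ∧
    Function.Injective (fun v : V =>
      ((conGen (presRel V U φ)).mk' (FreeMonoid.of (Sum.inl v)) : PresM V U φ)) ∧
    (∀ m : PresM V U φ, IsUnit m ↔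
      ∃ v : V, m = (conGen (presRel V U φ)).mk' (FreeMonoid.of (Sum.inl v))) ∧
    IsMonoidAtom ((conGen (presRel V U φ)).mk' (FreeMonoid.of (Sum.inr ())) :
      PresM V U φ) :=
  ⟨⟨fun _ _ _ => PresM.mul_left_cancel, PresM.equidivisible, ⟨_, PresM.isLengthFunction_len⟩,
      ⟨_, PresM.isMonoidAtom_X.1⟩⟩,
    PresM.incl_injective U φ, PresM.isUnit_iff_exists_eq_incl, PresM.isMonoidAtom_X⟩
end

section
/- Let G be a group, let A and B be subgroups of G, and let φ : A ≃ B be a group isomorphism. Let M be the monoid presented by generators the elements of G together with one additional generator t, subject to all relations holding in G together with the relations at = tφ(a) for all a ∈ A. Then the canonical monoid homomorphism from M to the HNN extension G* = ⟨G, t | t⁻¹at = φ(a) for a ∈ A⟩ (sending each g ∈ G to its image in G* and t to the stable letter) is injective; moreover G* together with this map is the universal group of M: every monoid homomorphism from M to a group factors uniquely through it as a group homomorphism from G*. -/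
/-!
Every element of the monoid has a positive normal form `g t r₁ t r₂ ⋯ t rₙ` with the `rᵢ` in a
fixed right transversal of `B`: a letter `t` absorbs the `B`-part of the element to its right,
since `t b = φ⁻¹(b) t`. Such a form is sent to a normal word of the HNN extension, and normal words
represent distinct elements (`HNNExtension.NormalWord.prod_injective`), so the canonical map is
injective. The monoid and the HNN extension are generated by `G` and `t` subject to the same
relations, which gives the universal property.
-/

/-- The defining relations of the monoid
`Mon⟨G, t ∣ relations of G, a t = t φ(a) (a ∈ A)⟩` on the free monoid over the
alphabet `G ⊕ Unit` (`Sum.inr ()` playing the role of the stable letter `t`). -/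
def hnnRel (G : Type*) [Group G] (A B : Subgroup G) (φ : A ≃* B) :
    FreeMonoid (G ⊕ Unit) → FreeMonoid (G ⊕ Unit) → Prop := fun w₁ w₂ =>
  (∃ a b : G, w₁ = FreeMonoid.of (Sum.inl a) * FreeMonoid.of (Sum.inl b) ∧
      w₂ = FreeMonoid.of (Sum.inl (a * b))) ∨
  (w₁ = FreeMonoid.of (Sum.inl (1 : G)) ∧ w₂ = 1) ∨
  (∃ a : A, w₁ = FreeMonoid.of (Sum.inl (a : G)) * FreeMonoid.of (Sum.inr ()) ∧
      w₂ = FreeMonoid.of (Sum.inr ()) * FreeMonoid.of (Sum.inl ((φ a : B) : G)))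

/-- The presented monoid `Mon⟨G, t ∣ relations of G, a t = t φ(a) (a ∈ A)⟩`. -/
def HNNMonoid (G : Type*) [Group G] (A B : Subgroup G) (φ : A ≃* B) :=
  (conGen (hnnRel G A B φ)).Quotient

instance (G : Type*) [Group G] (A B : Subgroup G) (φ : A ≃* B) :
    Monoid (HNNMonoid G A B φ) := by
  delta HNNMonoid; infer_instance

namespace HNNMonoid

variable {G : Type*} [Group G] {A B : Subgroup G} {φ : A ≃* B}

abbrev mk : FreeMonoid (G ⊕ Unit) →* HNNMonoid G A B φ := (conGen (hnnRel G A B φ)).mk'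

lemma mk_eq_mk_of_rel {w₁ w₂ : FreeMonoid (G ⊕ Unit)} (h : hnnRel G A B φ w₁ w₂) :
    (mk w₁ : HNNMonoid G A B φ) = mk w₂ :=
  (Con.eq _).2 (ConGen.Rel.of _ _ h)

variable (φ) in
def of : G →* HNNMonoid G A B φ where
  toFun g := mk (FreeMonoid.of (Sum.inl g))
  map_one' := by simpa using mk_eq_mk_of_rel (φ := φ) (Or.inr (Or.inl ⟨rfl, rfl⟩))
  map_mul' a b := by
    rw [← map_mul]
    exact (mk_eq_mk_of_rel (Or.inl ⟨a, b, rfl, rfl⟩)).symm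

variable (φ) in
def t : HNNMonoid G A B φ := mk (FreeMonoid.of (Sum.inr ()))

lemma of_mul_t (a : A) : of φ a * t φ = t φ * of φ (φ a : G) := by
  rw [of, t, MonoidHom.coe_mk, OneHom.coe_mk, ← map_mul, ← map_mul]
  exact mk_eq_mk_of_rel (Or.inr (Or.inr ⟨a, rfl, rfl⟩))

@[elab_as_elim]
lemma induction_on {p : HNNMonoid G A B φ → Prop} (x : HNNMonoid G A B φ) (one : p 1)
    (of_mul : ∀ g x, p x → p (of φ g * x)) (t_mul : ∀ x, p x → p (t φ * x)) : p x := by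
  induction x using Con.induction_on with | H w => ?_
  induction w using FreeMonoid.inductionOn' with
  | one => exact one
  | of_mul l w ih =>
    rcases l with g | ⟨⟩
    · exact of_mul g _ ih
    · exact t_mul _ ih

section lift

variable {M : Type*} [Monoid M]

def lift (f : G →* M) (x : M) (hx : ∀ a : A, f a * x = x * f (φ a : G)) :
    HNNMonoid G A B φ →* M :=
  (conGen (hnnRel G A B φ)).lift (FreeMonoid.lift (Sum.elim f fun _ => x)) <|
    Con.conGen_le.2 <| by
      rintro w₁ w₂ (⟨a, b, rfl, rfl⟩ | ⟨rfl, rfl⟩ | ⟨a, rfl, rfl⟩) <;>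
        simp [Con.ker_rel, hx]

variable (f : G →* M) (x : M) (hx : ∀ a : A, f a * x = x * f (φ a : G))

@[simp]
lemma lift_of (g : G) : lift f x hx (of φ g) = f g := rfl

@[simp]
lemma lift_t : lift f x hx (t φ) = x := rfl

end lift

@[ext]
lemma hom_ext {M : Type*} [Monoid M] {f₁ f₂ : HNNMonoid G A B φ →* M}
    (hof : f₁.comp (of φ) = f₂.comp (of φ)) (ht : f₁ (t φ) = f₂ (t φ)) : f₁ = f₂ := by
  ext x
  induction x using induction_on with
  | one => simp
  | of_mul g x ih => rw [map_mul, map_mul, ih, ← f₁.comp_apply, hof, f₂.comp_apply]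
  | t_mul x ih => simp [ih, ht]

variable (φ) in
def toHNNExtension : HNNMonoid G A B φ →* HNNExtension G B A φ.symm :=
  lift HNNExtension.of HNNExtension.t fun a => by
    simpa using HNNExtension.of_mul_t (φ := φ.symm) a

@[simp]
lemma toHNNExtension_of (g : G) : toHNNExtension φ (of φ g) = HNNExtension.of g := rfl

@[simp]
lemma toHNNExtension_t : toHNNExtension φ (t φ) = HNNExtension.t := rfl

lemma existsUnique_comp_toHNNExtension {H : Type*} [Group H] (f : HNNMonoid G A B φ →* H) :
    ∃! f' : HNNExtension G B A φ.symm →* H, f'.comp (toHNNExtension φ) = f := by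
  have hf : ∀ b : B, f (t φ) * f (of φ b) = f (of φ (φ.symm b : G)) * f (t φ) := fun b => by
    simpa [← map_mul] using (congrArg f (of_mul_t (φ.symm b))).symm
  refine ⟨HNNExtension.lift (f.comp (of φ)) (f (t φ)) hf, by ext <;> simp, ?_⟩
  rintro f' rfl
  ext <;> simp

section normalForm

open HNNExtension.NormalWord

variable (φ) in
def ofNormalForm (g : G) (L : List G) : HNNMonoid G A B φ :=
  of φ g * (L.map fun r => t φ * of φ r).prod

lemma exists_eq_ofNormalForm (d : TransversalPair G B A) (x : HNNMonoid G A B φ) :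
    ∃ g L, (∀ r ∈ L, r ∈ d.set 1) ∧ x = ofNormalForm φ g L := by
  induction x using induction_on with
  | one => exact ⟨1, [], by simp, by simp [ofNormalForm]⟩
  | of_mul h x ih =>
    obtain ⟨g, L, hL, rfl⟩ := ih
    exact ⟨h * g, L, hL, by simp [ofNormalForm, mul_assoc]⟩
  | t_mul x ih =>
    obtain ⟨g, L, hL, rfl⟩ := ih
    obtain ⟨⟨⟨b, hb⟩, ⟨r, hr⟩⟩, hbr, -⟩ := (d.compl 1).existsUnique g
    refine ⟨(φ.symm ⟨b, hb⟩ : G), r :: L, List.forall_mem_cons.2 ⟨hr, hL⟩, ?_⟩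
    have ht := of_mul_t (φ := φ) (φ.symm ⟨b, hb⟩)
    simp only [MulEquiv.apply_symm_apply] at ht
    simp only [ofNormalForm, ← hbr, map_mul, List.map_cons, List.prod_cons, ← mul_assoc, ht]

variable (d : TransversalPair G B A)

def positiveNormalWord (g : G) (L : List G) (hL : ∀ r ∈ L, r ∈ d.set 1) :
    HNNExtension.NormalWord d where
  head := g
  toList := L.map ((1 : ℤˣ), ·)
  mem_set := by
    simp only [List.mem_map, Prod.mk.injEq]
    rintro _ _ ⟨r, hr, rfl, rfl⟩
    exact hL r hr
  chain :=
    List.Pairwise.isChain <| List.pairwise_map.2 <| List.pairwise_of_forall fun _ _ _ => rfl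

lemma prod_positiveNormalWord (g : G) (L : List G) (hL : ∀ r ∈ L, r ∈ d.set 1) :
    (positiveNormalWord d g L hL).prod φ.symm = toHNNExtension φ (ofNormalForm φ g L) := by
  simp [positiveNormalWord, ofNormalForm, ReducedWord.prod, map_list_prod, Function.comp_def]

end normalForm

lemma toHNNExtension_injective : Function.Injective (toHNNExtension φ) := by
  obtain ⟨d⟩ := HNNExtension.NormalWord.TransversalPair.nonempty G B A
  intro x y hxy
  obtain ⟨g, L, hL, rfl⟩ := exists_eq_ofNormalForm d x
  obtain ⟨g', L', hL', rfl⟩ := exists_eq_ofNormalForm d y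
  have h := HNNExtension.NormalWord.prod_injective φ.symm d
    (a₁ := positiveNormalWord d g L hL) (a₂ := positiveNormalWord d g' L' hL')
    (by simpa only [prod_positiveNormalWord] using hxy)
  have hg : g = g' := congrArg (·.head) h
  have hLL' : L = L' :=
    (List.map_injective_iff.2 (Prod.mk_right_injective _)) (congrArg (·.toList) h)
  rw [hg, hLL']

end HNNMonoid

/-- `HNNExtension G B A φ.symm` is the HNN extension in which `a * t = t * φ(a)` for all
`a ∈ A`, i.e. `t⁻¹ a t = φ(a)`. -/
theorem stmt18 {G : Type u} [Group G] (A B : Subgroup G) (φ : A ≃* B) :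
    ∃ θ : HNNMonoid G A B φ →* HNNExtension G B A φ.symm,
      (∀ g : G, θ ((conGen (hnnRel G A B φ)).mk' (FreeMonoid.of (Sum.inl g))) =
        HNNExtension.of g) ∧
      θ ((conGen (hnnRel G A B φ)).mk' (FreeMonoid.of (Sum.inr ()))) =
        HNNExtension.t ∧
      Function.Injective θ ∧
      ∀ (H : Type v) [Group H] (f : HNNMonoid G A B φ →* H),
        ∃! f' : HNNExtension G B A φ.symm →* H, f'.comp θ = f :=
  ⟨HNNMonoid.toHNNExtension φ, fun _ => rfl, rfl, HNNMonoid.toHNNExtension_injective,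
    fun _ _ f => HNNMonoid.existsUnique_comp_toHNNExtension f⟩
end
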